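/- arXiv:0910.0644 — 4 statements merged into one kernel-verified Lean document; each statement's English description precedes it below -/
import Mathlib

section
/- Let R be a commutative ring, I an ideal of R, and P a prime ideal of R with I ⊆ P. Set P₀ = {(p, p+i) : p ∈ P, i ∈ I ∩ P}, P₁ = {(p, p+i) : p ∈ P, i ∈ I}, and P₂ = {(p+i, p) : p ∈ P, i ∈ I}. Then P₀ = P₁ = P₂, and the localization (R⋈I)_{P₀} is isomorphic as a ring to the amalgamated duplication R_P ⋈ I_P, where R_P is the localization of R at P and I_P is the ideal of R_P generated by the image of I. -/
universe u

open scoped TensorProduct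

namespace Paper

/-- The amalgamated duplication `R ⋈ I`, as the subring
`{(r, s) : s - r ∈ I} = {(r, r+i) : r ∈ R, i ∈ I}` of `R × R`. -/
def dup (R : Type*) [CommRing R] (I : Ideal R) : Subring (R × R) where
  carrier := {p | p.2 - p.1 ∈ I}
  zero_mem' := by simp
  one_mem' := by simp
  add_mem' := by
    intro a b ha hb
    simp only [Set.mem_setOf_eq, Prod.fst_add, Prod.snd_add] at *
    have h : a.2 + b.2 - (a.1 + b.1) = (a.2 - a.1) + (b.2 - b.1) := by ring
    rw [h]; exact I.add_mem ha hb
  neg_mem' := by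
    intro a ha
    simp only [Set.mem_setOf_eq, Prod.fst_neg, Prod.snd_neg] at *
    have h : -a.2 - -a.1 = -(a.2 - a.1) := by ring
    rw [h]; exact I.neg_mem ha
  mul_mem' := by
    intro a b ha hb
    simp only [Set.mem_setOf_eq, Prod.fst_mul, Prod.snd_mul] at *
    have h : a.2 * b.2 - a.1 * b.1 = a.2 * (b.2 - b.1) + (a.2 - a.1) * b.1 := by ring
    rw [h]; exact I.add_mem (I.mul_mem_left _ hb) (I.mul_mem_right _ ha)

lemma mem_dup {R : Type*} [CommRing R] {I : Ideal R} {p : R × R} :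
    p ∈ dup R I ↔ p.2 - p.1 ∈ I := Iff.rfl

/-- The diagonal embedding `R → R ⋈ I`, `r ↦ (r, r)`. -/
def diag (R : Type*) [CommRing R] (I : Ideal R) : R →+* dup R I where
  toFun r := ⟨(r, r), mem_dup.mpr (by simp)⟩
  map_one' := rfl
  map_mul' _ _ := rfl
  map_zero' := rfl
  map_add' _ _ := rfl

noncomputable instance dupAlgebra (R : Type*) [CommRing R] (I : Ideal R) :
    Algebra R (dup R I) := (diag R I).toAlgebra

/-- `pdLE R n M` means that `M` has projective dimension `≤ n` as an `R`-module. -/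
def pdLE (R : Type u) [CommRing R] : ℕ → (M : Type u) → [AddCommGroup M] → [Module R M] → Prop
  | 0, M, _, _ => Module.Projective R M
  | (n + 1), M, _, _ => pdLE R n (LinearMap.ker (Finsupp.linearCombination R (id : M → M)))

/-- `fdLE R n M` means that `M` has flat dimension `≤ n` as an `R`-module. -/
def fdLE (R : Type u) [CommRing R] : ℕ → (M : Type u) → [AddCommGroup M] → [Module R M] → Prop
  | 0, M, _, _ => Module.Flat R M
  | (n + 1), M, _, _ => fdLE R n (LinearMap.ker (Finsupp.linearCombination R (id : M → M)))

/-- The projective dimension of an `R`-module `M`, as an element of `ℕ∞`. -/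
noncomputable def projDim (R : Type u) [CommRing R] (M : Type u) [AddCommGroup M]
    [Module R M] : ℕ∞ :=
  sInf {n : ℕ∞ | ∃ k : ℕ, (k : ℕ∞) = n ∧ pdLE R k M}

/-- The flat dimension of an `R`-module `M`, as an element of `ℕ∞`. -/
noncomputable def flatDim (R : Type u) [CommRing R] (M : Type u) [AddCommGroup M]
    [Module R M] : ℕ∞ :=
  sInf {n : ℕ∞ | ∃ k : ℕ, (k : ℕ∞) = n ∧ fdLE R k M}

/-- The global dimension of `R`: the supremum of projective dimensions of `R`-modules. -/
noncomputable def gldim (R : Type u) [CommRing R] : ℕ∞ :=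
  ⨆ (M : Type u) (_ : AddCommGroup M) (_ : Module R M), projDim R M

/-- The weak global dimension of `R`: the supremum of flat dimensions of `R`-modules. -/
noncomputable def wdim (R : Type u) [CommRing R] : ℕ∞ :=
  ⨆ (M : Type u) (_ : AddCommGroup M) (_ : Module R M), flatDim R M


/-- The first projection `R ⋈ I → R`, `(r, r+i) ↦ r`. -/
def dupFst (R : Type*) [CommRing R] (I : Ideal R) : dup R I →+* R :=
  (RingHom.fst R R).comp (dup R I).subtype

/-- The second projection `R ⋈ I → R`, `(r, r+i) ↦ r + i`. -/
def dupSnd (R : Type*) [CommRing R] (I : Ideal R) : dup R I →+* R :=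
  (RingHom.snd R R).comp (dup R I).subtype

/-- A commutative ring is von Neumann regular if every `a` satisfies `a = a²b` for some `b`. -/
def IsVNRegular (R : Type*) [CommRing R] : Prop := ∀ a : R, ∃ b : R, a = a * a * b

/-- A commutative ring is semihereditary if every finitely generated ideal is projective. -/
def IsSemihereditary (R : Type*) [CommRing R] : Prop :=
  ∀ J : Ideal R, J.FG → Module.Projective R J

/-- A commutative ring is coherent if every finitely generated ideal is finitely presented. -/
def IsCoherentRing (R : Type*) [CommRing R] : Prop :=
  ∀ J : Ideal R, J.FG → Module.FinitePresentation R J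

/-- The content of a polynomial: the ideal generated by its coefficients. -/
def contentIdeal {R : Type*} [CommRing R] (f : Polynomial R) : Ideal R :=
  Ideal.span (Set.range f.coeff)

/-- A commutative ring is Gaussian if `c(fg) = c(f)c(g)` for all polynomials `f, g`. -/
def IsGaussianRing (R : Type*) [CommRing R] : Prop :=
  ∀ f g : Polynomial R, contentIdeal (f * g) = contentIdeal f * contentIdeal g

/-- `R` is a `(1,d)`-ring if every finitely presented (i.e. `1`-presented) `R`-module has
projective dimension at most `d`. -/
def IsOneDRing (R : Type u) [CommRing R] (d : ℕ) : Prop :=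
  ∀ (M : Type u) [AddCommGroup M] [Module R M],
    Module.FinitePresentation R M → projDim R M ≤ (d : ℕ∞)

/-- The trace ideal of an `R`-module `M`: the sum of the images of all `R`-linear maps
`M → R`. -/
def traceIdeal (R : Type*) [CommRing R] (M : Type*) [AddCommGroup M] [Module R M] : Ideal R :=
  ⨆ f : M →ₗ[R] R, LinearMap.range f

/-!
Localizing `R ⋈ I` at the diagonal image of a multiplicative set `M ⊆ R` localizes both
components, giving `M⁻¹R ⋈ M⁻¹I`. For `I ⊆ P`, the elements `(r, r + i)` with `r ∉ P`, which are
the ones inverted when localizing at `P₀`, are already units of `R_P ⋈ I_P`: `r + i` differs from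
the unit `r` by an element of the maximal ideal of `R_P`. Hence localizing at `P₀` and at the
diagonal image of `R \ P` give the same ring.
-/

section

variable {R S : Type*} [CommRing R] [CommRing S]

@[simp]
lemma dupFst_apply {I : Ideal R} (x : dup R I) : dupFst R I x = (x : R × R).1 := rfl

lemma coe_comap_dupFst (I P : Ideal R) :
    (P.comap (dupFst R I) : Set (dup R I)) =
      {x : dup R I | ∃ p ∈ P, ∃ i ∈ I, (x : R × R) = (p, p + i)} := by
  ext x
  refine ⟨fun hx => ⟨_, hx, _, x.2, by ext <;> simp⟩, ?_⟩
  rintro ⟨p, hp, i, -, hx⟩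
  simpa [hx] using hp

lemma coe_comap_dupFst_of_le {I P : Ideal R} (hIP : I ≤ P) :
    (P.comap (dupFst R I) : Set (dup R I)) =
      {x : dup R I | ∃ p ∈ P, ∃ i ∈ I, (x : R × R) = (p + i, p)} := by
  ext x
  have hsnd : (x : R × R).2 = (x : R × R).1 + ((x : R × R).2 - (x : R × R).1) := by ring
  refine ⟨fun hx => ⟨_, hsnd ▸ P.add_mem hx (hIP x.2), _, I.neg_mem x.2, by ext <;> simp⟩, ?_⟩
  rintro ⟨p, hp, i, hi, hx⟩
  simpa [hx] using P.add_mem hp (hIP hi)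

def dupMap (f : R →+* S) (I : Ideal R) : dup R I →+* dup S (I.map f) :=
  ((f.prodMap f).comp (dup R I).subtype).codRestrict _ fun x => by
    show f _ - f _ ∈ I.map f
    rw [← map_sub]
    exact Ideal.mem_map_of_mem f x.2

lemma isUnit_of_isUnit_fst_of_isUnit_snd {J : Ideal S} {x : dup S J}
    (h₁ : IsUnit (x : S × S).1) (h₂ : IsUnit (x : S × S).2) : IsUnit x := by
  obtain ⟨u, hu⟩ := h₁
  obtain ⟨v, hv⟩ := h₂
  have hinv : (((u⁻¹ : Sˣ) : S), ((v⁻¹ : Sˣ) : S)) ∈ dup S J := by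
    have : ((v⁻¹ : Sˣ) - (u⁻¹ : Sˣ) : S) =
        -((u⁻¹ : Sˣ) * (v⁻¹ : Sˣ)) * ((x : S × S).2 - (x : S × S).1) := by
      rw [← hu, ← hv]
      linear_combination (↑(u⁻¹ : Sˣ) : S) * v.inv_mul - (↑(v⁻¹ : Sˣ) : S) * u.inv_mul
    rw [mem_dup, this]
    exact J.mul_mem_left _ x.2
  refine IsUnit.of_mul_eq_one ⟨_, hinv⟩ (Subtype.ext (Prod.ext ?_ ?_))
  · simp [← hu]
  · simp [← hv]

noncomputable instance dupLocalizationAlgebra [Algebra R S] (I : Ideal R) :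
    Algebra (dup R I) (dup S (I.map (algebraMap R S))) :=
  (dupMap (algebraMap R S) I).toAlgebra

lemma isLocalization_dup [Algebra R S] (M : Submonoid R) [IsLocalization M S] (I : Ideal R) :
    IsLocalization (M.map (diag R I)) (dup S (I.map (algebraMap R S))) where
  map_units := by
    rintro ⟨_, m, hm, rfl⟩
    exact isUnit_of_isUnit_fst_of_isUnit_snd (IsLocalization.map_units S ⟨m, hm⟩)
      (IsLocalization.map_units S ⟨m, hm⟩)
  surj z := by
    obtain ⟨⟨a, s⟩, hs⟩ := IsLocalization.surj M (z : S × S).1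
    obtain ⟨⟨⟨i, hi⟩, t⟩, ht⟩ := (IsLocalization.mem_map_algebraMap_iff M S).mp z.2
    -- `z = (a/s, a/s + i/t) = (at, at + is)/(st)`
    have hnum : ((a * t, a * t + i * s) : R × R) ∈ dup R I := by
      simpa [mem_dup] using I.mul_mem_right (s : R) hi
    refine ⟨⟨⟨_, hnum⟩, ⟨diag R I (s * t), Submonoid.mem_map_of_mem _ (s * t).2⟩⟩, ?_⟩
    ext
    · show (z : S × S).1 * algebraMap R S (s * t) = algebraMap R S (a * t)
      rw [map_mul, map_mul, ← mul_assoc, hs]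
    · show (z : S × S).2 * algebraMap R S (s * t) = algebraMap R S (a * t + i * s)
      rw [map_add, map_mul, map_mul, map_mul, ← hs, ← ht]
      ring
  exists_of_eq {x y} h := by
    have h₁ : algebraMap R S (x : R × R).1 = algebraMap R S (y : R × R).1 :=
      congrArg (fun z : dup S (I.map (algebraMap R S)) => (z : S × S).1) h
    have h₂ : algebraMap R S (x : R × R).2 = algebraMap R S (y : R × R).2 :=
      congrArg (fun z : dup S (I.map (algebraMap R S)) => (z : S × S).2) h
    obtain ⟨c₁, hc₁⟩ := IsLocalization.exists_of_eq (M := M) h₁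
    obtain ⟨c₂, hc₂⟩ := IsLocalization.exists_of_eq (M := M) h₂
    refine ⟨⟨diag R I (c₁ * c₂), Submonoid.mem_map_of_mem _ (c₁ * c₂).2⟩,
      Subtype.ext (Prod.ext ?_ ?_)⟩
    · show (c₁ * c₂ : R) * (x : R × R).1 = c₁ * c₂ * (y : R × R).1
      linear_combination (c₂ : R) * hc₁
    · show (c₁ * c₂ : R) * (x : R × R).2 = c₁ * c₂ * (y : R × R).2
      linear_combination (c₁ : R) * hc₂

lemma isUnit_of_isUnit_fst [IsLocalRing S] {J : Ideal S} (hJ : J ≤ IsLocalRing.maximalIdeal S)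
    {x : dup S J} (h : IsUnit (x : S × S).1) : IsUnit x := by
  refine isUnit_of_isUnit_fst_of_isUnit_snd h (IsLocalRing.notMem_maximalIdeal.mp fun h₂ => ?_)
  exact IsLocalRing.notMem_maximalIdeal.mpr h (by simpa using sub_mem h₂ (hJ x.2))

lemma isLocalization_atPrime_dup {I P : Ideal R} [P.IsPrime] (hIP : I ≤ P) :
    IsLocalization.AtPrime
      (dup (Localization.AtPrime P) (I.map (algebraMap R (Localization.AtPrime P))))
      (P.comap (dupFst R I)) := by
  have := isLocalization_dup (S := Localization.AtPrime P) P.primeCompl I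
  refine IsLocalization.of_le (P.primeCompl.map (diag R I)) _ ?_ fun x hx => ?_
  · rintro _ ⟨m, hm, rfl⟩
    exact hm
  · have hI : I.map (algebraMap R (Localization.AtPrime P)) ≤
        IsLocalRing.maximalIdeal (Localization.AtPrime P) :=
      Localization.AtPrime.map_eq_maximalIdeal (I := P) ▸ Ideal.map_mono hIP
    exact isUnit_of_isUnit_fst hI (IsLocalization.map_units _ (⟨_, hx⟩ : P.primeCompl))

end

/-- D'Anna's localization lemma, case `I ⊆ P`: the sets `P₀`, `P₁`, `P₂` coincide (and form
the prime ideal `P₀ = (dupFst)⁻¹(P)` of `R ⋈ I`), and the localization of `R ⋈ I` at `P₀`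
is ring-isomorphic to `R_P ⋈ I_P`. -/
theorem dup_localization_of_le (R : Type u) [CommRing R] (I P : Ideal R) [P.IsPrime]
    (hIP : I ≤ P) :
    let P₀ : Set (dup R I) := {x | ∃ p ∈ P, ∃ i, i ∈ I ∧ i ∈ P ∧ (x : R × R) = (p, p + i)}
    let P₁ : Set (dup R I) := {x | ∃ p ∈ P, ∃ i ∈ I, (x : R × R) = (p, p + i)}
    let P₂ : Set (dup R I) := {x | ∃ p ∈ P, ∃ i ∈ I, (x : R × R) = (p + i, p)}
    P₀ = P₁ ∧ P₁ = P₂ ∧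
    ((P.comap (dupFst R I) : Ideal (dup R I)) : Set (dup R I)) = P₀ ∧
    Nonempty (Localization.AtPrime (P.comap (dupFst R I)) ≃+*
      dup (Localization.AtPrime P) (I.map (algebraMap R (Localization.AtPrime P)))) := by
  intro P₀ P₁ P₂
  have h₀₁ : P₀ = P₁ := Set.ext fun x =>
    ⟨fun ⟨p, hp, i, hi, _, hx⟩ => ⟨p, hp, i, hi, hx⟩,
      fun ⟨p, hp, i, hi, hx⟩ => ⟨p, hp, i, hi, hIP hi, hx⟩⟩
  have h₁ : (P.comap (dupFst R I) : Set (dup R I)) = P₁ := coe_comap_dupFst I P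
  have h₂ : (P.comap (dupFst R I) : Set (dup R I)) = P₂ := coe_comap_dupFst_of_le hIP
  have := isLocalization_atPrime_dup hIP
  exact ⟨h₀₁, h₁.symm.trans h₂, h₁.trans h₀₁.symm,
    ⟨(IsLocalization.algEquiv (P.comap (dupFst R I)).primeCompl _ _).toRingEquiv⟩⟩

end Paper
end

section
/- Let R be a commutative ring and let I be a finitely generated pure ideal of R. Then R is semihereditary if and only if R⋈I is semihereditary. -/
universe u

open scoped TensorProduct

namespace Paper

/-!
A finitely generated pure ideal `I` is idempotent, hence generated by an idempotent `e`; then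
`E = (0, e)` is an idempotent of `R ⋈ I` with `(R ⋈ I) ⧸ (E) ≅ R` and
`(R ⋈ I) ⧸ (1 - E) ≅ R ⧸ (1 - e)`. For an idempotent `f` of a ring `A`, `A` is
semihereditary iff `A ⧸ (f)` and `A ⧸ (1 - f)` are: a finitely generated ideal of `A` is the
product of its images in the two factors, and each factor is a direct summand of `A`, so
projectivity passes between `A` and the factors. As `R ⧸ (1 - e)` is a factor of `R`, both
sides of the equivalence say that `R` is semihereditary.
-/

theorem Module.Projective.trans (A B M : Type*) [CommSemiring A] [Semiring B] [Algebra A B]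
    [AddCommMonoid M] [Module A M] [Module B M] [IsScalarTower A B M]
    [Module.Projective A B] [Module.Projective B M] : Module.Projective A M := by
  classical
  obtain ⟨s, hs⟩ := Module.projective_def'.mp ‹Module.Projective B M›
  have : Module.Projective A (M →₀ B) := .of_equiv (finsuppLequivDFinsupp A).symm
  refine .of_split (s.restrictScalars A)
    ((Finsupp.linearCombination B id).restrictScalars A) (LinearMap.ext fun m ↦ ?_)
  exact DFunLike.congr_fun hs m

section Idempotent

variable {A : Type*} [CommRing A] {f : A}

theorem exists_leftInverse_mkQ_span_singleton (hf : IsIdempotentElem f) :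
    ∃ s : (A ⧸ Ideal.span {f}) →ₗ[A] A, Function.LeftInverse (Ideal.span {f}).mkQ s := by
  refine ⟨(Ideal.span {f}).liftQ (LinearMap.mulLeft A (1 - f)) ?_, fun x ↦ ?_⟩
  · rw [Ideal.span_le, Set.singleton_subset_iff]
    simp [sub_mul, hf.eq]
  · obtain ⟨a, rfl⟩ := Ideal.Quotient.mk_surjective x
    change Ideal.Quotient.mk _ ((1 - f) * a) = Ideal.Quotient.mk _ a
    rw [Ideal.Quotient.eq, Ideal.mem_span_singleton']
    exact ⟨-a, by ring⟩

theorem projective_quotient_span_singleton (hf : IsIdempotentElem f) :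
    Module.Projective A (A ⧸ Ideal.span {f}) := by
  obtain ⟨s, hs⟩ := exists_leftInverse_mkQ_span_singleton hf
  exact .of_split s (Ideal.span {f}).mkQ (LinearMap.ext hs)

theorem IsSemihereditary.quotient_span_singleton (h : IsSemihereditary A)
    (hf : IsIdempotentElem f) : IsSemihereditary (A ⧸ Ideal.span {f}) := by
  intro J hJ
  obtain ⟨s, hs⟩ := exists_leftInverse_mkQ_span_singleton hf
  -- the section `s` embeds `J` into `A` as an ideal
  have hJA : (J.restrictScalars A).FG :=
    Submodule.FG.restrictScalars_of_surjective hJ Ideal.Quotient.mk_surjective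
  have := h _ (hJA.map s)
  have : Module.Projective A J :=
    .of_equiv (Submodule.equivMapOfInjective s hs.injective (J.restrictScalars A)).symm
  -- `A → A ⧸ (f)` is surjective, hence unramified, so projectivity descends along it.
  exact Algebra.FormallyUnramified.projective_of_restrictScalars A _ J

def restrictQuotientMk (I J : Ideal A) : J →ₗ[A] J.map (Ideal.Quotient.mk I) :=
  (Algebra.linearMap A (A ⧸ I) ∘ₗ J.subtype).codRestrict
    ((J.map (Ideal.Quotient.mk I)).restrictScalars A) fun j ↦ Ideal.mem_map_of_mem _ j.2

@[simp]
theorem coe_restrictQuotientMk (I J : Ideal A) (j : J) :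
    (restrictQuotientMk I J j : A ⧸ I) = Ideal.Quotient.mk I j :=
  rfl

theorem bijective_restrictQuotientMk_prod (hf : IsIdempotentElem f) (J : Ideal A) :
    Function.Bijective
      ((restrictQuotientMk (Ideal.span {f}) J).prod
        (restrictQuotientMk (Ideal.span {1 - f}) J)) := by
  have mk_self (g : A) : Ideal.Quotient.mk (Ideal.span {g}) g = 0 :=
    Ideal.Quotient.eq_zero_iff_mem.mpr (Ideal.mem_span_singleton_self g)
  have mk_f : Ideal.Quotient.mk (Ideal.span {1 - f}) f = 1 := by
    have h := mk_self (1 - f)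
    rw [map_sub, map_one, sub_eq_zero] at h
    exact h.symm
  constructor
  · intro x y hxy
    have h₁ : Ideal.Quotient.mk _ (x : A) = Ideal.Quotient.mk (Ideal.span {f}) y :=
      congrArg (fun p ↦ p.1.val) hxy
    have h₂ : Ideal.Quotient.mk _ (x : A) = Ideal.Quotient.mk (Ideal.span {1 - f}) y :=
      congrArg (fun p ↦ p.2.val) hxy
    rw [Ideal.Quotient.eq, Ideal.mem_span_singleton'] at h₁ h₂
    obtain ⟨a, ha⟩ := h₁
    obtain ⟨b, hb⟩ := h₂
    ext
    linear_combination (f - 1) * ha - f * hb - (a + b) * hf.eq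
  · rintro ⟨⟨y₁, hy₁⟩, ⟨y₂, hy₂⟩⟩
    obtain ⟨a, ha, rfl⟩ :=
      (Ideal.mem_map_iff_of_surjective _ Ideal.Quotient.mk_surjective).mp hy₁
    obtain ⟨b, hb, rfl⟩ :=
      (Ideal.mem_map_iff_of_surjective _ Ideal.Quotient.mk_surjective).mp hy₂
    refine ⟨⟨(1 - f) * a + f * b,
      J.add_mem (J.mul_mem_left _ ha) (J.mul_mem_left _ hb)⟩, ?_⟩
    ext <;> simp [mk_self, mk_f]

theorem isSemihereditary_of_quotient_span_singleton (hf : IsIdempotentElem f)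
    (h₁ : IsSemihereditary (A ⧸ Ideal.span {f}))
    (h₂ : IsSemihereditary (A ⧸ Ideal.span {1 - f})) : IsSemihereditary A := by
  intro J hJ
  have := projective_quotient_span_singleton hf
  have := projective_quotient_span_singleton hf.one_sub
  have := h₁ _ (hJ.map (Ideal.Quotient.mk _))
  have := h₂ _ (hJ.map (Ideal.Quotient.mk _))
  have : Module.Projective A (J.map (Ideal.Quotient.mk (Ideal.span {f}))) :=
    Module.Projective.trans A (A ⧸ Ideal.span {f}) _
  have : Module.Projective A (J.map (Ideal.Quotient.mk (Ideal.span {1 - f}))) :=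
    Module.Projective.trans A (A ⧸ Ideal.span {1 - f}) _
  exact .of_equiv (LinearEquiv.ofBijective _ (bijective_restrictQuotientMk_prod hf J)).symm

theorem isSemihereditary_iff_quotient_span_singleton (hf : IsIdempotentElem f) :
    IsSemihereditary A ↔
      IsSemihereditary (A ⧸ Ideal.span {f}) ∧ IsSemihereditary (A ⧸ Ideal.span {1 - f}) :=
  ⟨fun h ↦ ⟨h.quotient_span_singleton hf, h.quotient_span_singleton hf.one_sub⟩,
    fun h ↦ isSemihereditary_of_quotient_span_singleton hf h.1 h.2⟩

end Idempotent

attribute [local instance] RingHomInvPair.of_ringEquiv in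
theorem IsSemihereditary.of_ringEquiv {A B : Type*} [CommRing A] [CommRing B] (e : A ≃+* B)
    (h : IsSemihereditary A) : IsSemihereditary B := by
  intro J hJ
  have := h _ (Submodule.FG.map e.symm.toSemilinearEquiv.toLinearMap hJ)
  exact .of_equiv (e.symm.toSemilinearEquiv.submoduleMap J).symm

theorem isSemihereditary_iff_of_ringEquiv {A B : Type*} [CommRing A] [CommRing B]
    (e : A ≃+* B) : IsSemihereditary A ↔ IsSemihereditary B :=
  ⟨.of_ringEquiv e, .of_ringEquiv e.symm⟩

section Duplication

variable {R : Type*} [CommRing R] {e : R}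

def dupIdem (e : R) : dup R (Ideal.span {e}) :=
  ⟨(0, e), mem_dup.mpr (by simp)⟩

theorem isIdempotentElem_dupIdem (he : IsIdempotentElem e) : IsIdempotentElem (dupIdem e) :=
  Subtype.ext (Prod.ext (zero_mul 0) he.eq)

theorem dupFst_surjective (I : Ideal R) : Function.Surjective (dupFst R I) :=
  fun r ↦ ⟨diag R I r, rfl⟩

theorem dupSnd_surjective (I : Ideal R) : Function.Surjective (dupSnd R I) :=
  fun r ↦ ⟨diag R I r, rfl⟩

theorem ker_dupFst (e : R) :
    RingHom.ker (dupFst R (Ideal.span {e})) = Ideal.span {dupIdem e} := by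
  ext ⟨⟨r, s⟩, hrs⟩
  rw [mem_dup, Ideal.mem_span_singleton'] at hrs
  rw [RingHom.mem_ker, Ideal.mem_span_singleton']
  constructor
  · rintro (rfl : r = 0)
    obtain ⟨a, ha⟩ := hrs
    exact ⟨diag R _ a, Subtype.ext (Prod.ext (mul_zero a) (ha.trans (sub_zero s)))⟩
  · rintro ⟨c, hc⟩
    exact (congrArg (fun x ↦ x.1.1) hc).symm.trans (mul_zero _)

theorem ker_quotient_dupSnd (he : IsIdempotentElem e) :
    RingHom.ker ((Ideal.Quotient.mk (Ideal.span {1 - e})).comp (dupSnd R (Ideal.span {e}))) =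
      Ideal.span {1 - dupIdem e} := by
  ext ⟨⟨r, s⟩, hrs⟩
  rw [RingHom.mem_ker, RingHom.comp_apply, Ideal.Quotient.eq_zero_iff_mem,
    Ideal.mem_span_singleton', Ideal.mem_span_singleton']
  constructor
  · rintro ⟨a, (ha : a * (1 - e) = s)⟩
    refine ⟨⟨(r, s), hrs⟩, Subtype.ext (Prod.ext (by simp [dupIdem]) ?_)⟩
    change s * (1 - e) = s
    rw [← ha, mul_assoc, he.one_sub.eq]
  · rintro ⟨c, hc⟩
    exact ⟨c.1.2, congrArg (fun x ↦ x.1.2) hc⟩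

noncomputable def quotientSpanDupIdemEquiv (e : R) :
    dup R (Ideal.span {e}) ⧸ Ideal.span {dupIdem e} ≃+* R :=
  (Ideal.quotEquivOfEq (ker_dupFst e).symm).trans
    (RingHom.quotientKerEquivOfSurjective (dupFst_surjective _))

noncomputable def quotientSpanOneSubDupIdemEquiv (he : IsIdempotentElem e) :
    dup R (Ideal.span {e}) ⧸ Ideal.span {1 - dupIdem e} ≃+* R ⧸ Ideal.span {1 - e} :=
  (Ideal.quotEquivOfEq (ker_quotient_dupSnd he).symm).trans
    (RingHom.quotientKerEquivOfSurjective
      (Ideal.Quotient.mk_surjective.comp (dupSnd_surjective _)))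

end Duplication

/-- If `I` is a finitely generated pure ideal of `R`, then `R` is semihereditary if and
only if `R ⋈ I` is semihereditary. -/
theorem isSemihereditary_dup_iff (R : Type u) [CommRing R] (I : Ideal R)
    (hfg : I.FG) (hpure : Module.Flat R (R ⧸ I)) :
    IsSemihereditary R ↔ IsSemihereditary (dup R I) := by
  have : I.Pure := hpure
  obtain ⟨e, he, rfl⟩ := (I.isIdempotentElem_iff_of_fg hfg).mp I.isIdempotentElem_of_pure
  rw [Ideal.submodule_span_eq,
    isSemihereditary_iff_quotient_span_singleton (isIdempotentElem_dupIdem he),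
    isSemihereditary_iff_of_ringEquiv (quotientSpanDupIdemEquiv e),
    isSemihereditary_iff_of_ringEquiv (quotientSpanOneSubDupIdemEquiv he)]
  exact ⟨fun h ↦ ⟨h, h.quotient_span_singleton he.one_sub⟩, And.left⟩

end Paper
end

section
/- Let R be a von Neumann regular commutative ring and let I be an ideal of R. Then the amalgamated duplication R⋈I is von Neumann regular. -/
universe u

open scoped TensorProduct

namespace Paper

/-! In a von Neumann regular ring every `r` has a unique `r'` with `r = r²r'` and `r' = r'²r`.
Uniqueness forces ring homomorphisms to preserve it, so for `(r, s) ∈ R ⋈ I` the elements `r'` and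
`s'` agree modulo `I`, because `r` and `s` do; then `(r', s') ∈ R ⋈ I` is the required multiplier
of `(r, s)`. -/

def IsVNInverse {M : Type*} [CommMonoid M] (a b : M) : Prop :=
  a = a * a * b ∧ b = b * b * a

theorem isVNInverse_mul_mul_self {M : Type*} [CommMonoid M] {a b : M} (h : a = a * a * b) :
    IsVNInverse a (b * b * a) := by
  constructor
  · calc a = a * a * b := h
      _ = a * b * a := by ac_rfl
      _ = a * a * b * b * a := by rw [← h]
      _ = a * a * (b * b * a) := by ac_rfl
  · calc b * b * a = b * b * (a * a * b) := by rw [← h]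
      _ = a * (b * b * b * a) := by ac_rfl
      _ = a * a * b * (b * b * b * a) := by rw [← h]
      _ = b * b * a * (b * b * a) * a := by ac_rfl

theorem IsVNInverse.unique {M : Type*} [CommMonoid M] {a b c : M} (hb : IsVNInverse a b)
    (hc : IsVNInverse a c) : b = c := by
  have hab : a * b = a * c := by
    calc a * b = a * a * c * b := by rw [← hc.1]
      _ = a * a * b * c := by ac_rfl
      _ = a * c := by rw [← hb.1]
  calc b = b * b * a := hb.2
    _ = a * b * b := by ac_rfl
    _ = a * c * b := by rw [hab]
    _ = a * b * c := by ac_rfl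
    _ = a * c * c := by rw [hab]
    _ = c * c * a := by ac_rfl
    _ = c := hc.2.symm

theorem IsVNInverse.map {M N F : Type*} [CommMonoid M] [CommMonoid N] [FunLike F M N]
    [MonoidHomClass F M N] (f : F) {a b : M} (h : IsVNInverse a b) : IsVNInverse (f a) (f b) :=
  ⟨by rw [← map_mul, ← map_mul, ← h.1], by rw [← map_mul, ← map_mul, ← h.2]⟩

theorem IsVNRegular.exists_isVNInverse {R : Type*} [CommRing R] (hR : IsVNRegular R) (a : R) :
    ∃ b, IsVNInverse a b :=
  let ⟨b, hb⟩ := hR a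
  ⟨b * b * a, isVNInverse_mul_mul_self hb⟩

theorem IsVNInverse.sub_mem {R : Type*} [CommRing R] {I : Ideal R} {r s r' s' : R}
    (hr : IsVNInverse r r') (hs : IsVNInverse s s') (h : s - r ∈ I) : s' - r' ∈ I := by
  rw [← Ideal.Quotient.eq] at h ⊢
  exact (hs.map (Ideal.Quotient.mk I)).unique (h ▸ hr.map (Ideal.Quotient.mk I))

/-- If `R` is a von Neumann regular ring and `I` an ideal of `R`, then `R ⋈ I` is a von
Neumann regular ring. -/
theorem isVNRegular_dup (R : Type u) [CommRing R] (I : Ideal R)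
    (hR : IsVNRegular R) :
    IsVNRegular (dup R I) := by
  rintro ⟨⟨r, s⟩, hrs⟩
  obtain ⟨r', hr⟩ := hR.exists_isVNInverse r
  obtain ⟨s', hs⟩ := hR.exists_isVNInverse s
  exact ⟨⟨(r', s'), hr.sub_mem hs hrs⟩, Subtype.ext (Prod.ext hr.1 hs.1)⟩

end Paper
end

section
/- Let R be a semisimple commutative ring and let I be an ideal of R. Then the amalgamated duplication R⋈I is semisimple. -/
universe u

open scoped TensorProduct

namespace Paper

/-!
`R ⋈ I` is a subring of `R × R`, hence reduced, and an `R`-submodule of `R × R`, hence a finite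
module over the Artinian ring `R`, hence itself Artinian. A reduced commutative Artinian ring is a
finite product of fields, so it is semisimple.
-/

theorem isSemisimpleRing_of_isReduced_of_moduleFinite (R S : Type*) [CommRing R]
    [IsArtinianRing R] [CommRing S] [IsReduced S] [Algebra R S] [Module.Finite R S] :
    IsSemisimpleRing S :=
  have : IsArtinianRing S := .of_finite R S
  IsArtinianRing.isSemisimpleRing_of_isReduced S

instance dup.isReduced {R : Type*} [CommRing R] [IsReduced R] (I : Ideal R) :
    IsReduced (dup R I) :=
  isReduced_of_injective (dup R I).subtype Subtype.val_injective

def dupVal (R : Type*) [CommRing R] (I : Ideal R) : dup R I →ₐ[R] R × R :=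
  { (dup R I).subtype with commutes' := fun _ => rfl }

instance dup.moduleFinite {R : Type*} [CommRing R] [IsNoetherianRing R] (I : Ideal R) :
    Module.Finite R (dup R I) :=
  .of_injective (dupVal R I).toLinearMap Subtype.val_injective

/-- If `R` is a semisimple ring and `I` an ideal of `R`, then `R ⋈ I` is semisimple. -/
theorem isSemisimpleRing_dup (R : Type u) [CommRing R] [IsSemisimpleRing R] (I : Ideal R) :
    IsSemisimpleRing (dup R I) :=
  isSemisimpleRing_of_isReduced_of_moduleFinite R (dup R I)

end Paper
end
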